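/- arXiv:2307.05073 — 10 statements merged into one kernel-verified Lean document; each statement's English description precedes it below -/
import Mathlib

section
/- If (W, R) is a reflexive, transitive and strongly convergent frame, then the derived belief relation R_B is transitive. -/
def RB {W : Type*} (R : W → W → Prop) (w u : W) : Prop := ∀ v, R w v → R v u

theorem RB.rel_of_refl {W : Type*} {R : W → W → Prop} {v u : W} (hv : R v v) (h : RB R v u) :
    R v u :=
  h v hv

theorem RB_transitive_general {W : Type*} (R : W → W → Prop)
    (hrefl : ∀ w, R w w) (htrans : ∀ w v u, R w v → R v u → R w u) :
    ∀ w v u, RB R w v → RB R v u → RB R w u := by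
  intro w v u hwv hvu x hwx
  exact htrans x v u (hwv x hwx) (hvu.rel_of_refl (hrefl v))

theorem RB_transitive {W : Type*} [Nonempty W] (R : W → W → Prop)
    (hrefl : ∀ w, R w w) (htrans : ∀ w v u, R w v → R v u → R w u)
    (hconv : ∀ w, ∃ u, ∀ v, R w v → R v u) :
    ∀ w v u, RB R w v → RB R v u → RB R w u :=
  RB_transitive_general R hrefl htrans
end

section
/- If (W, R) is a reflexive, transitive and strongly convergent frame, then the derived belief relation R_B is Euclidean: if w R_B u and w R_B u', then u R_B u'. -/
section

variable {W : Type*} {R : W → W → Prop} {w u u' : W}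

theorem RB.rel_of_refl_s2 (hrefl : ∀ w, R w w) (h : RB R w u) : R w u :=
  h w (hrefl w)

theorem RB.of_rel_of_trans (htrans : ∀ w v u, R w v → R v u → R w u)
    (hwu : R w u) (h : RB R w u') : RB R u u' :=
  fun v huv => h v (htrans w u v hwu huv)

end

theorem RB_euclidean_general {W : Type*} (R : W → W → Prop)
    (hrefl : ∀ w, R w w) (htrans : ∀ w v u, R w v → R v u → R w u) :
    ∀ w u u', RB R w u → RB R w u' → RB R u u' :=
  fun _ _ _ hu hu' => hu'.of_rel_of_trans htrans (hu.rel_of_refl_s2 hrefl)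

theorem RB_euclidean {W : Type*} [Nonempty W] (R : W → W → Prop)
    (hrefl : ∀ w, R w w) (htrans : ∀ w v u, R w v → R v u → R w u)
    (hconv : ∀ w, ∃ u, ∀ v, R w v → R v u) :
    ∀ w u u', RB R w u → RB R w u' → RB R u u' :=
  RB_euclidean_general R hrefl htrans
end

section
/- Let (W, R) be a reflexive, transitive and strongly convergent frame, let D be a nonempty set (the constant domain), and for each a ∈ D let P(a) : W → Prop be a family of propositions. Define the belief modality [B]φ at w as: for all u with w R_B u, φ holds at u (where w R_B u iff every R-successor of w relates to u via R). Then for any d ∈ D and any w ∈ W: if for all u with w R_B u, P(d) holds at u, then for all v with w R_B v, the formula [K^MS_FS] holds at v, where [K^MS_FS] holds at a world x iff (i) there exists a ∈ D such that P(a) holds at all R-successors of x, and (ii) for all b ∈ D, if P(b) holds at all R_B-successors of x, then P(b) holds at x. (This is the validity of the axiom BtoBK_wh: [B]φ[y/x] → [B][K^MS_FS]^x φ.) -/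
theorem RB.trans_rel {W : Type*} {R : W → W → Prop} (htrans : ∀ w v u, R w v → R v u → R w u)
    {w v x : W} (hv : RB R w v) (hvx : R v x) : RB R w x :=
  fun t hwt => htrans t v x (hv t hwt) hvx

theorem RB.rb_self {W : Type*} {R : W → W → Prop} (hrefl : ∀ w, R w w)
    (htrans : ∀ w v u, R w v → R v u → R w u) {w v : W} (hv : RB R w v) : RB R v v :=
  fun t hvt => hv t (htrans w v t (hv w (hrefl w)) hvt)

theorem BtoBKwh_valid_general {W : Type*} {D : Type*}
    (R : W → W → Prop) (P : D → W → Prop)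
    (hrefl : ∀ w, R w w) (htrans : ∀ w v u, R w v → R v u → R w u)
    (d : D) (w : W)
    (hB : ∀ u, RB R w u → P d u) :
    ∀ v, RB R w v →
      ((∃ a, ∀ x, R v x → P a x) ∧ (∀ b, (∀ u, RB R v u → P b u) → P b v)) :=
  fun _ hv =>
    ⟨⟨d, fun _ hvx => hB _ (hv.trans_rel htrans hvx)⟩,
      fun _ hb => hb _ (hv.rb_self hrefl htrans)⟩

theorem BtoBKwh_valid {W : Type*} [Nonempty W] {D : Type*} [Nonempty D]
    (R : W → W → Prop) (P : D → W → Prop)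
    (hrefl : ∀ w, R w w) (htrans : ∀ w v u, R w v → R v u → R w u)
    (hconv : ∀ w, ∃ u, ∀ v, R w v → R v u)
    (d : D) (w : W)
    (hB : ∀ u, RB R w u → P d u) :
    ∀ v, RB R w v →
      ((∃ a, ∀ x, R v x → P a x) ∧ (∀ b, (∀ u, RB R v u → P b u) → P b v)) :=
  BtoBKwh_valid_general R P hrefl htrans d w hB
end

section
/- There exists a reflexive, transitive, strongly convergent frame (W, R), a constant domain D, and a predicate interpretation P : D → W → Prop, and a world w ∈ W, such that [tB^MS] holds at w but [tB^MS] fails at some R-successor of w. That is, positive introspection [tB^MS]^x φ → [K][tB^MS]^x φ is not valid on the class of S4.2-constant-domain models. -/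
/-! On the chain `0 ≤ 1 ≤ 2` the only `R_B`-successor of any world is the top world `2`. A
predicate true at `0` and `2` but false at `1` is therefore a true belief at `0` which is no
longer true, hence no longer a true belief, at the successor `1`. -/

theorem rb_le_iff_eq_top {W : Type*} [PartialOrder W] [OrderTop W] {w u : W} :
    RB (· ≤ ·) w u ↔ u = ⊤ :=
  ⟨fun h => top_le_iff.1 (h ⊤ le_top), by rintro rfl v -; exact le_top⟩

theorem tBMS_not_pos_introspective :
    ∃ (W : Type) (R : W → W → Prop) (D : Type) (P : D → W → Prop) (w : W),
      Nonempty D ∧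
      (∀ x, R x x) ∧ (∀ x y z, R x y → R y z → R x z) ∧
      (∀ x, ∃ u, ∀ v, R x v → R v u) ∧
      (∃ a, (∀ u, RB R w u → P a u) ∧ P a w) ∧
      (∃ v, R w v ∧ ¬ ∃ a, (∀ u, RB R v u → P a u) ∧ P a v) := by
  refine ⟨Fin 3, (· ≤ ·), Unit, fun _ u => u ≠ 1, 0, ⟨()⟩, le_refl, fun _ _ _ => le_trans,
    fun _ => ⟨⊤, fun _ _ => le_top⟩, ⟨(), fun u hu => ?_, by decide⟩, ⟨1, by decide, ?_⟩⟩
  · rw [rb_le_iff_eq_top.1 hu]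
    decide
  · rintro ⟨_, -, h⟩
    exact h rfl
end

section
/- There exists a reflexive, transitive, strongly convergent frame with constant domain, a predicate interpretation, and a world w such that [K^MS_FS] holds at w but fails at some R-successor of w. That is, positive introspection [K^MS_FS]^x φ → [K][K^MS_FS]^x φ is not valid on the class of S4.2-constant-domain models. -/
/-- `[K^MS_FS]^x P` at `w`. -/
def KMSFS {W D : Type*} (R : W → W → Prop) (P : D → W → Prop) (w : W) : Prop :=
  (∃ a, ∀ v, R w v → P a v) ∧ ∀ b, (∀ u, RB R w u → P b u) → P b w

theorem rb_le_iff_top_le {W : Type*} [Preorder W] [OrderTop W] {w u : W} :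
    RB (· ≤ ·) w u ↔ ⊤ ≤ u :=
  ⟨fun h => h ⊤ le_top, fun h _ _ => le_top.trans h⟩

theorem kmsfs_le_iff {W D : Type*} [PartialOrder W] [OrderTop W] {P : D → W → Prop} {w : W} :
    KMSFS (· ≤ ·) P w ↔ (∃ a, ∀ v, w ≤ v → P a v) ∧ ∀ b, P b ⊤ → P b w := by
  simp only [KMSFS, rb_le_iff_top_le]
  refine and_congr_right fun _ => forall_congr' fun b => imp_congr_left ?_
  exact ⟨fun h => h ⊤ le_rfl, fun h u hu => top_le_iff.mp hu ▸ h⟩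

theorem KMSFS_not_pos_introspective :
    ∃ (W : Type) (R : W → W → Prop) (D : Type) (P : D → W → Prop) (w : W),
      Nonempty D ∧
      (∀ x, R x x) ∧ (∀ x y z, R x y → R y z → R x z) ∧
      (∀ x, ∃ u, ∀ v, R x v → R v u) ∧
      ((∃ a, ∀ v, R w v → P a v) ∧ (∀ b, (∀ u, RB R w u → P b u) → P b w)) ∧
      (∃ v, R w v ∧
        ¬ ((∃ a, ∀ x, R v x → P a x) ∧ (∀ b, (∀ u, RB R v u → P b u) → P b v))) := by
  let P : Bool → Fin 3 → Prop := fun b i => b ∨ i ≠ 1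
  have holds_at_zero : KMSFS (· ≤ ·) P 0 := kmsfs_le_iff.mpr (by decide)
  have fails_at_one : ¬ KMSFS (· ≤ ·) P 1 := kmsfs_le_iff.not.mpr (by decide)
  exact ⟨Fin 3, (· ≤ ·), Bool, P, 0, ⟨true⟩, le_refl, fun _ _ _ => le_trans,
    fun _ => ⟨⊤, fun _ _ => le_top⟩, holds_at_zero, 1, by decide, fails_at_one⟩
end

section
/- On any reflexive, transitive, strongly convergent frame with constant domain D and predicate P : D → W → Prop: for any d ∈ D and w ∈ W, if P(d) holds at every R_B-successor of w (i.e., [B]P(d) holds at w), then at every R_B-successor v of w, [B]P(d) holds at v. That is, the KD45 axiom [B]φ → [B][B]φ is valid for the derived belief modality. -/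
section RB

variable {W : Type*} {R : W → W → Prop}

theorem rel_of_RB {v u : W} (hv : R v v) (h : RB R v u) : R v u :=
  h v hv

theorem RB_trans (hrefl : ∀ w, R w w) (htrans : ∀ w v u, R w v → R v u → R w u)
    {w v u : W} (hwv : RB R w v) (hvu : RB R v u) : RB R w u :=
  fun x hwx => htrans x v u (hwv x hwx) (rel_of_RB (hrefl v) hvu)

end RB

theorem B_pos_introspection_general {W : Type*} {D : Type*}
    (R : W → W → Prop) (P : D → W → Prop)
    (hrefl : ∀ w, R w w) (htrans : ∀ w v u, R w v → R v u → R w u)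
    (d : D) (w : W) (h : ∀ u, RB R w u → P d u) :
    ∀ v, RB R w v → ∀ u, RB R v u → P d u :=
  fun _ hwv u hvu => h u (RB_trans hrefl htrans hwv hvu)

theorem B_pos_introspection {W : Type*} [Nonempty W] {D : Type*} [Nonempty D]
    (R : W → W → Prop) (P : D → W → Prop)
    (hrefl : ∀ w, R w w) (htrans : ∀ w v u, R w v → R v u → R w u)
    (hconv : ∀ w, ∃ u, ∀ v, R w v → R v u)
    (d : D) (w : W) (h : ∀ u, RB R w u → P d u) :
    ∀ v, RB R w v → ∀ u, RB R v u → P d u :=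
  B_pos_introspection_general R P hrefl htrans d w h
end

section
/- On any reflexive, transitive, strongly convergent frame, the derived belief modality satisfies negative introspection: for any proposition φ : W → Prop and world w, if it is not the case that φ holds at all R_B-successors of w, then at every R_B-successor v of w, it is not the case that φ holds at all R_B-successors of v. (¬[B]φ → [B]¬[B]φ is valid.) -/
/-! Over a reflexive transitive frame `RB R` is Euclidean, and the box of any Euclidean relation
satisfies negative introspection. -/

section

variable {W : Type*} {R : W → W → Prop} {w v u : W}

theorem RB.rel (hrefl : ∀ w, R w w) (hwv : RB R w v) : R w v :=
  hwv w (hrefl w)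

theorem RB.euclidean (hrefl : ∀ w, R w w) (htrans : ∀ w v u, R w v → R v u → R w u)
    (hwv : RB R w v) (hwu : RB R w u) : RB R v u :=
  fun x hvx => hwu x (htrans w v x (hwv.rel hrefl) hvx)

theorem not_forall_imp_of_euclidean {S : W → W → Prop}
    (heucl : ∀ a b c, S a b → S a c → S b c) (φ : W → Prop)
    (h : ¬ ∀ u, S w u → φ u) : ∀ v, S w v → ¬ ∀ u, S v u → φ u :=
  fun _ hwv hv => h fun u hwu => hv u (heucl _ _ _ hwv hwu)

end

theorem B_neg_introspection_general {W : Type*} (R : W → W → Prop)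
    (hrefl : ∀ w, R w w) (htrans : ∀ w v u, R w v → R v u → R w u)
    (φ : W → Prop) (w : W) (h : ¬ ∀ u, RB R w u → φ u) :
    ∀ v, RB R w v → ¬ ∀ u, RB R v u → φ u :=
  not_forall_imp_of_euclidean (S := RB R) (fun _ _ _ => RB.euclidean hrefl htrans) φ h

theorem B_neg_introspection {W : Type*} [Nonempty W] (R : W → W → Prop)
    (hrefl : ∀ w, R w w) (htrans : ∀ w v u, R w v → R v u → R w u)
    (hconv : ∀ w, ∃ u, ∀ v, R w v → R v u)
    (φ : W → Prop) (w : W) (h : ¬ ∀ u, RB R w u → φ u) :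
    ∀ v, RB R w v → ¬ ∀ u, RB R v u → φ u :=
  B_neg_introspection_general R hrefl htrans φ w h
end

section
/- On any reflexive, transitive, strongly convergent frame, the interaction principle [B]φ → [K][B]φ is valid: for any φ : W → Prop and world w, if φ holds at all R_B-successors of w, then for every R-successor v of w, φ holds at all R_B-successors of v. -/
/- Every successor `x` of `w` reaches a common upper bound `t` of the successors of `w`, and `t`,
being a successor of `v`, sees `u`. -/
theorem RB.of_rel_left {W : Type*} {R : W → W → Prop}
    (htrans : ∀ w v u, R w v → R v u → R w u) (hconv : ∀ w, ∃ u, ∀ v, R w v → R v u)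
    {w v u : W} (hwv : R w v) (hvu : RB R v u) : RB R w u := by
  obtain ⟨t, ht⟩ := hconv w
  exact fun x hwx => htrans x t u (ht x hwx) (hvu t (ht v hwv))

theorem B_to_KB_general {W : Type*} (R : W → W → Prop)
    (htrans : ∀ w v u, R w v → R v u → R w u)
    (hconv : ∀ w, ∃ u, ∀ v, R w v → R v u)
    (φ : W → Prop) (w : W) (h : ∀ u, RB R w u → φ u) :
    ∀ v, R w v → ∀ u, RB R v u → φ u :=
  fun _ hwv u hvu => h u (RB.of_rel_left htrans hconv hwv hvu)

theorem B_to_KB {W : Type*} [Nonempty W] (R : W → W → Prop)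
    (hrefl : ∀ w, R w w) (htrans : ∀ w v u, R w v → R v u → R w u)
    (hconv : ∀ w, ∃ u, ∀ v, R w v → R v u)
    (φ : W → Prop) (w : W) (h : ∀ u, RB R w u → φ u) :
    ∀ v, R w v → ∀ u, RB R v u → φ u :=
  B_to_KB_general R htrans hconv φ w h
end

section
/- In any reflexive transitive frame (W, R) with constant domain D and predicate P : D → W → Prop, defining [B]ψ := ⟨K⟩[K]ψ (i.e., [B]ψ holds at w iff there exists an R-successor v of w such that ψ holds at all R-successors of v), the formula [K^MS]^x φ → [K^MS]^x [B]φ is valid, i.e., if there exists a ∈ D such that P(a) holds at all R-successors of w, then there exists a ∈ D such that ⟨K⟩[K]P(a) holds at all R-successors of w. -/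
theorem KMS_to_KMS_B {W : Type*} [Nonempty W] {D : Type*} [Nonempty D]
    (R : W → W → Prop) (P : D → W → Prop)
    (hrefl : ∀ w, R w w) (htrans : ∀ w v u, R w v → R v u → R w u)
    (w : W) (h : ∃ a, ∀ v, R w v → P a v) :
    ∃ a, ∀ v, R w v → ∃ u, R v u ∧ ∀ x, R u x → P a x := by
  obtain ⟨a, ha⟩ := h
  exact ⟨a, fun v hv => ⟨v, hrefl v, fun x hx => ha x (htrans w v x hv hx)⟩⟩
end

section
/- On any reflexive, transitive, strongly convergent frame with constant domain D and predicate P : D → W → Prop, the formula [K^MS_FS] → [B][K^MS_FS] combined with consistency of belief yields: if [K^MS_FS] holds at w, then it is not the case that ¬[K^MS_FS] holds at all R_B-successors of w. Equivalently, [K^MS_FS]^x φ → ⟨B⟩[K^MS_FS]^x φ is valid on S4.2-constant-domain models. -/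
/-!
A convergence point `u` of `w` is an `R_B`-successor of `w` that is also an `R_B`-successor of
itself, so clause (ii) of `[K^MS_FS]` holds at `u` trivially, while clause (i) is inherited from
`w` along `R` by transitivity.
-/

section

variable {W D : Type*} {R : W → W → Prop}

theorem RB.rel_s18 (hrefl : ∀ w, R w w) {w u : W} (h : RB R w u) : R w u :=
  h w (hrefl w)

theorem RB.self_of_rel (htrans : ∀ w v u, R w v → R v u → R w u) {w u : W}
    (hR : R w u) (h : RB R w u) : RB R u u :=
  fun v huv => h v (htrans w u v hR huv)

theorem exists_forall_rel_of_rel (htrans : ∀ w v u, R w v → R v u → R w u) {P : D → W → Prop}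
    {w u : W} (hR : R w u) (h : ∃ a, ∀ v, R w v → P a v) : ∃ a, ∀ v, R u v → P a v :=
  let ⟨a, ha⟩ := h
  ⟨a, fun v huv => ha v (htrans w u v hR huv)⟩

end

theorem KMSFS_to_diaB_KMSFS_general {W : Type*} {D : Type*}
    (R : W → W → Prop) (P : D → W → Prop)
    (hrefl : ∀ w, R w w) (htrans : ∀ w v u, R w v → R v u → R w u)
    (hconv : ∀ w, ∃ u, ∀ v, R w v → R v u)
    (w : W)
    (h : (∃ a, ∀ v, R w v → P a v) ∧ (∀ b, (∀ u, RB R w u → P b u) → P b w)) :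
    ∃ v, RB R w v ∧
      ((∃ a, ∀ x, R v x → P a x) ∧ (∀ b, (∀ u, RB R v u → P b u) → P b v)) := by
  obtain ⟨u, hwu⟩ : ∃ u, RB R w u := hconv w
  have hR : R w u := hwu.rel_s18 hrefl
  have huu : RB R u u := hwu.self_of_rel htrans hR
  exact ⟨u, hwu, exists_forall_rel_of_rel htrans hR h.1, fun b hb => hb u huu⟩

theorem KMSFS_to_diaB_KMSFS {W : Type*} [Nonempty W] {D : Type*} [Nonempty D]
    (R : W → W → Prop) (P : D → W → Prop)
    (hrefl : ∀ w, R w w) (htrans : ∀ w v u, R w v → R v u → R w u)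
    (hconv : ∀ w, ∃ u, ∀ v, R w v → R v u)
    (w : W)
    (h : (∃ a, ∀ v, R w v → P a v) ∧ (∀ b, (∀ u, RB R w u → P b u) → P b w)) :
    ∃ v, RB R w v ∧
      ((∃ a, ∀ x, R v x → P a x) ∧ (∀ b, (∀ u, RB R v u → P b u) → P b v)) :=
  KMSFS_to_diaB_KMSFS_general R P hrefl htrans hconv w h
end
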